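/- arXiv:1408.3604 — 2 statements merged into one kernel-verified Lean document; each statement's English description precedes it below -/
import Mathlib

section
/- Let L and L' be distributive abstract logics and h : Expr(L) → Expr(L') a stable logic map (preimages of theories are theories and preimages of prime theories are prime theories). Then h preserves disjunction and conjunction up to logical equivalence: h(a ∨ b) ≡ h(a) ∨ h(b) and h(a ∧ b) ≡ h(a) ∧ h(b), where c ≡ d means c and d belong to exactly the same prime theories of L'. -/
variable {α : Type*} {β : Type*}

def PrimeTheory {γ : Type*} (Th : Set (Set γ)) (T : Set γ) : Prop :=
  T ∈ Th ∧ ∀ 𝒯 ⊆ Th, 𝒯.Finite → 𝒯.Nonempty → T = ⋂₀ 𝒯 → T ∈ 𝒯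

/-- `S_a`, the set of prime theories containing `a`. -/
def primeSet {γ : Type*} (Th : Set (Set γ)) (a : γ) : Set (Set γ) :=
  {P | PrimeTheory Th P ∧ a ∈ P}

/- `h (c a b) ∈ P'` is `c a b ∈ h ⁻¹' P'`, and `h ⁻¹' P'` is again prime. -/
theorem primeSet_map_connective {Th : Set (Set α)} {Th' : Set (Set β)} {h : α → β}
    (hstable : ∀ P', PrimeTheory Th' P' → PrimeTheory Th (h ⁻¹' P'))
    (f : Prop → Prop → Prop) {c : α → α → α} {c' : β → β → β}
    (hc : ∀ a b P, PrimeTheory Th P → (c a b ∈ P ↔ f (a ∈ P) (b ∈ P)))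
    (hc' : ∀ a b P, PrimeTheory Th' P → (c' a b ∈ P ↔ f (a ∈ P) (b ∈ P))) (a b : α) :
    primeSet Th' (h (c a b)) = primeSet Th' (c' (h a) (h b)) := by
  ext P'
  exact and_congr_right fun hP' => (hc a b _ (hstable P' hP')).trans (hc' _ _ P' hP').symm

theorem stmt13_general (Th : Set (Set α)) (Th' : Set (Set β))
    (and or : α → α → α) (and' or' : β → β → β)
    (hand : ∀ a b : α, ∀ P, PrimeTheory Th P → (and a b ∈ P ↔ a ∈ P ∧ b ∈ P))
    (hor : ∀ a b : α, ∀ P, PrimeTheory Th P → (or a b ∈ P ↔ a ∈ P ∨ b ∈ P))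
    (hand' : ∀ a b : β, ∀ P, PrimeTheory Th' P → (and' a b ∈ P ↔ a ∈ P ∧ b ∈ P))
    (hor' : ∀ a b : β, ∀ P, PrimeTheory Th' P → (or' a b ∈ P ↔ a ∈ P ∨ b ∈ P))
    (h : α → β)
    (hstable : ∀ P', PrimeTheory Th' P' → PrimeTheory Th (h ⁻¹' P')) :
    ∀ a b : α,
      primeSet Th' (h (or a b)) = primeSet Th' (or' (h a) (h b)) ∧
      primeSet Th' (h (and a b)) = primeSet Th' (and' (h a) (h b)) := fun a b =>
  ⟨primeSet_map_connective hstable Or hor hor' a b,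
    primeSet_map_connective hstable And hand hand' a b⟩

theorem stmt13 (Th : Set (Set α)) (Th' : Set (Set β))
    (and or : α → α → α) (and' or' : β → β → β)
    (hne : Th.Nonempty) (hne' : Th'.Nonempty)
    (hinter : ∀ 𝒯 ⊆ Th, 𝒯.Nonempty → ⋂₀ 𝒯 ∈ Th)
    (hinter' : ∀ 𝒯 ⊆ Th', 𝒯.Nonempty → ⋂₀ 𝒯 ∈ Th')
    (hgen : ∀ T ∈ Th, ∃ 𝒯 ⊆ {P | PrimeTheory Th P}, 𝒯.Nonempty ∧ T = ⋂₀ 𝒯)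
    (hgen' : ∀ T ∈ Th', ∃ 𝒯 ⊆ {P | PrimeTheory Th' P}, 𝒯.Nonempty ∧ T = ⋂₀ 𝒯)
    (hand : ∀ a b : α, ∀ P, PrimeTheory Th P → (and a b ∈ P ↔ a ∈ P ∧ b ∈ P))
    (hor : ∀ a b : α, ∀ P, PrimeTheory Th P → (or a b ∈ P ↔ a ∈ P ∨ b ∈ P))
    (hand' : ∀ a b : β, ∀ P, PrimeTheory Th' P → (and' a b ∈ P ↔ a ∈ P ∧ b ∈ P))
    (hor' : ∀ a b : β, ∀ P, PrimeTheory Th' P → (or' a b ∈ P ↔ a ∈ P ∨ b ∈ P))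
    (h : α → β)
    (hlog : ∀ T' ∈ Th', h ⁻¹' T' ∈ Th)
    (hstable : ∀ P', PrimeTheory Th' P' → PrimeTheory Th (h ⁻¹' P')) :
    ∀ a b : α,
      primeSet Th' (h (or a b)) = primeSet Th' (or' (h a) (h b)) ∧
      primeSet Th' (h (and a b)) = primeSet Th' (and' (h a) (h b)) :=
  stmt13_general Th Th' and or and' or' hand hor hand' hor' h hstable
end

section
/- Let A, A' be Heyting algebras and h : A → A' a map preserving ∧, ∨, ⊤, ⊥ and satisfying h(a → b) ≤ h(a) → h(b), with the strong stability property: for every prime filter P' of A' and prime filter P of A with h⁻¹(P') ⊆ P, there exists a prime filter Q' of A' with P' ⊆ Q' and h⁻¹(Q') = P. Then h preserves implication: h(a → b) = h(a) → h(b) for all a, b ∈ A. -/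
variable {α : Type*} {β : Type*}

def IsLatFilter {γ : Type*} [Lattice γ] (F : Set γ) : Prop :=
  F.Nonempty ∧ (∀ x ∈ F, ∀ y, x ≤ y → y ∈ F) ∧ ∀ x ∈ F, ∀ y ∈ F, x ⊓ y ∈ F

def IsPrimeFilter {γ : Type*} [Lattice γ] (F : Set γ) : Prop :=
  IsLatFilter F ∧ F ≠ Set.univ ∧ ∀ a b : γ, a ⊔ b ∈ F → a ∈ F ∨ b ∈ F

/-!
If `h a ⇨ h b ≰ h (a ⇨ b)`, a prime filter `P'` of `A'` contains `h a ⇨ h b` but not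
`h (a ⇨ b)`. Its preimage `P` is a prime filter of `A` avoiding `a ⇨ b`, so some prime filter
`Q ⊇ P` contains `a` but not `b`. Strong stability lifts `Q` to a prime filter `Q' ⊇ P'` with
`h ⁻¹' Q' = Q`; then `h a` and `h a ⇨ h b` lie in `Q'`, hence so does `h b`, i.e. `b ∈ Q`.
-/

section Lattice

variable {γ δ : Type*} [Lattice γ]

theorem isLatFilter_Ici (x : γ) : IsLatFilter (Set.Ici x) :=
  ⟨⟨x, le_rfl⟩, fun _ hx _ hxy => hx.trans hxy, fun _ hx _ hy => le_inf hx hy⟩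

theorem IsLatFilter.isPFilter {F : Set γ} (hF : IsLatFilter F) : Order.IsPFilter F :=
  Order.IsPFilter.of_def hF.1
    (fun x hx y hy => ⟨x ⊓ y, hF.2.2 x hx y hy, inf_le_left, inf_le_right⟩)
    (fun {x y} hxy hx => hF.2.1 x hx y hxy)

theorem isPrimeFilter_compl_of_isPrime {J : Order.Ideal γ} (hJ : J.IsPrime) :
    IsPrimeFilter (J : Set γ)ᶜ := by
  let F := hJ.compl_filter.toPFilter
  refine ⟨⟨F.nonempty, fun x hx y hxy => F.mem_of_le hxy hx, fun x hx y hy => F.inf_mem hx hy⟩,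
    ?_, fun a b hab => ?_⟩
  · obtain ⟨x, hx⟩ := J.nonempty
    exact fun h => (h ▸ Set.mem_univ x : x ∈ (J : Set γ)ᶜ) hx
  · by_contra! hmem
    simp only [Set.notMem_compl_iff] at hmem
    exact hab (J.sup_mem hmem.1 hmem.2)

theorem IsPrimeFilter.preimage [BoundedOrder γ] [Lattice δ] [BoundedOrder δ]
    (f : BoundedLatticeHom γ δ) {F : Set δ} (hF : IsPrimeFilter F) : IsPrimeFilter (f ⁻¹' F) := by
  obtain ⟨⟨⟨x, hx⟩, hup, hinf⟩, hne, hprime⟩ := hF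
  refine ⟨⟨⟨⊤, ?_⟩, fun x hx y hxy => hup _ hx _ (OrderHomClass.mono f hxy),
    fun x hx y hy => ?_⟩, ?_, fun a b hab => hprime _ _ (by rwa [Set.mem_preimage, map_sup] at hab)⟩
  · simpa only [Set.mem_preimage, map_top] using hup x hx ⊤ le_top
  · simpa only [Set.mem_preimage, map_inf] using hinf _ hx _ hy
  · intro huniv
    have hbot : ⊥ ∈ F := by simpa using (huniv ▸ Set.mem_univ ⊥ : (⊥ : γ) ∈ f ⁻¹' F)
    exact hne (Set.eq_univ_of_forall fun z => hup ⊥ hbot z bot_le)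

end Lattice

theorem IsLatFilter.exists_isPrimeFilter_of_notMem {γ : Type*} [DistribLattice γ] {F : Set γ}
    (hF : IsLatFilter F) {b : γ} (hb : b ∉ F) :
    ∃ Q : Set γ, IsPrimeFilter Q ∧ F ⊆ Q ∧ b ∉ Q := by
  have hdisj : Disjoint (hF.isPFilter.toPFilter : Set γ) (Order.Ideal.principal b : Set γ) :=
    Set.disjoint_left.mpr fun x hx hxb => hb (hF.2.1 x hx b hxb)
  obtain ⟨J, hJ, hbJ, hJF⟩ := DistribLattice.prime_ideal_of_disjoint_filter_ideal hdisj
  exact ⟨(J : Set γ)ᶜ, isPrimeFilter_compl_of_isPrime hJ,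
    fun x hx hxJ => Set.disjoint_left.mp hJF hx hxJ,
    fun hbJc => hbJc (hbJ Order.Ideal.mem_principal_self)⟩

theorem IsLatFilter.mem_of_himp_mem {γ : Type*} [GeneralizedHeytingAlgebra γ] {F : Set γ}
    (hF : IsLatFilter F) {a b : γ} (ha : a ∈ F) (hab : a ⇨ b ∈ F) : b ∈ F :=
  hF.2.1 _ (hF.2.2 _ hab _ ha) _ himp_inf_le

theorem IsLatFilter.exists_isPrimeFilter_of_himp_notMem {γ : Type*} [HeytingAlgebra γ]
    {P : Set γ} (hP : IsLatFilter P) {a b : γ} (hab : a ⇨ b ∉ P) :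
    ∃ Q : Set γ, IsPrimeFilter Q ∧ P ⊆ Q ∧ a ∈ Q ∧ b ∉ Q := by
  obtain ⟨⟨w, hw⟩, hup, hinf⟩ := hP
  let G : Set γ := {z | ∃ p ∈ P, p ⊓ a ≤ z}
  have haG : a ∈ G := ⟨w, hw, inf_le_right⟩
  have hG : IsLatFilter G := by
    refine ⟨⟨a, haG⟩, fun x ⟨p, hp, hpx⟩ y hxy => ⟨p, hp, hpx.trans hxy⟩,
      fun x ⟨p, hp, hpx⟩ y ⟨q, hq, hqy⟩ => ⟨p ⊓ q, hinf p hp q hq, ?_⟩⟩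
    calc p ⊓ q ⊓ a = (p ⊓ a) ⊓ (q ⊓ a) := by rw [inf_inf_distrib_right]
      _ ≤ x ⊓ y := inf_le_inf hpx hqy
  have hbG : b ∉ G := fun ⟨p, hp, hpb⟩ => hab (hup p hp _ (le_himp_iff.mpr hpb))
  obtain ⟨Q, hQ, hGQ, hbQ⟩ := hG.exists_isPrimeFilter_of_notMem hbG
  exact ⟨Q, hQ, fun p hp => hGQ ⟨p, hp, inf_le_left⟩, hGQ haG, hbQ⟩

theorem stmt19 [HeytingAlgebra α] [HeytingAlgebra β] (h : α → β)
    (hinf : ∀ a b : α, h (a ⊓ b) = h a ⊓ h b)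
    (hsup : ∀ a b : α, h (a ⊔ b) = h a ⊔ h b)
    (htop : h ⊤ = ⊤) (hbot : h ⊥ = ⊥)
    (hhimp : ∀ a b : α, h (a ⇨ b) ≤ h a ⇨ h b)
    (hstrong : ∀ P' : Set β, IsPrimeFilter P' → ∀ P : Set α, IsPrimeFilter P →
      h ⁻¹' P' ⊆ P → ∃ Q' : Set β, IsPrimeFilter Q' ∧ P' ⊆ Q' ∧ h ⁻¹' Q' = P) :
    ∀ a b : α, h (a ⇨ b) = h a ⇨ h b := by
  intro a b
  let f : BoundedLatticeHom α β :=
    { toFun := h, map_sup' := hsup, map_inf' := hinf, map_top' := htop, map_bot' := hbot }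
  refine le_antisymm (hhimp a b) ?_
  by_contra hle
  obtain ⟨P', hP', hIciP', hnotP'⟩ :=
    (isLatFilter_Ici (h a ⇨ h b)).exists_isPrimeFilter_of_notMem hle
  obtain ⟨Q, hQ, hPQ, haQ, hbQ⟩ := (hP'.preimage f).1.exists_isPrimeFilter_of_himp_notMem hnotP'
  obtain ⟨Q', hQ', hPQ', rfl⟩ := hstrong P' hP' Q hQ hPQ
  exact hbQ (hQ'.1.mem_of_himp_mem haQ (hPQ' (hIciP' le_rfl)))
end
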